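/- arXiv:2403.05674 — 8 statements merged into one kernel-verified Lean document; each statement's English description precedes it below -/
import Mathlib

section
/- For every n-uniform hypergraph H with m edges, if m < 2^(n-1) then H is 2-colorable (has property B). Equivalently, m(n) ≥ 2^(n-1). -/
/-!
Union bound over the edges: among the `2 ^ |V|` colorings, at most `2 ^ (|V| - |e| + 1)` make a
given edge `e` monochromatic, so if these counts sum to less than `2 ^ |V|` some coloring makes
no edge monochromatic. For fewer than `2 ^ (n - 1)` edges of size `n` the sum is below
`2 ^ (n - 1) * 2 ^ (|V| - n + 1) = 2 ^ |V|`.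
-/

open Finset

variable {V : Type*} [Fintype V]

section DecidableEq

variable [DecidableEq V]

theorem filter_forall_mem_eq_eq_piFinset (e : Finset V) (b : Bool) :
    ({c | ∀ x ∈ e, c x = b} : Finset (V → Bool)) =
      Fintype.piFinset fun x => if x ∈ e then {b} else univ := by
  ext c
  simp only [mem_filter, mem_univ, true_and, Fintype.mem_piFinset]
  refine forall_congr' fun x => ?_
  split_ifs with hx <;> simp [hx]

theorem card_filter_forall_mem_eq (e : Finset V) (b : Bool) :
    #{c : V → Bool | ∀ x ∈ e, c x = b} = 2 ^ (Fintype.card V - #e) := by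
  rw [filter_forall_mem_eq_eq_piFinset, Fintype.card_piFinset, ← card_compl]
  simp [apply_ite card, prod_ite, filter_not, compl_eq_univ_sdiff]

theorem card_filter_monochromatic_le (e : Finset V) :
    #{c : V → Bool | (∀ x ∈ e, c x = true) ∨ (∀ x ∈ e, c x = false)} ≤
      2 ^ (Fintype.card V - #e + 1) := by
  rw [filter_or, pow_succ, mul_two]
  nth_rw 1 [← card_filter_forall_mem_eq e true]
  rw [← card_filter_forall_mem_eq e false]
  exact card_union_le _ _

end DecidableEq

theorem exists_bicoloring_of_sum_lt (E : Finset (Finset V))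
    (hE : ∑ e ∈ E, 2 ^ (Fintype.card V - #e + 1) < 2 ^ Fintype.card V) :
    ∃ c : V → Bool, ∀ e ∈ E, (∃ x ∈ e, c x = true) ∧ (∃ x ∈ e, c x = false) := by
  classical
  set bad := E.biUnion fun e =>
    {c : V → Bool | (∀ x ∈ e, c x = true) ∨ (∀ x ∈ e, c x = false)}
  have hbad : #bad < #(univ : Finset (V → Bool)) := calc
    #bad ≤ ∑ e ∈ E, 2 ^ (Fintype.card V - #e + 1) :=
      card_biUnion_le.trans (sum_le_sum fun e _ => card_filter_monochromatic_le e)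
    _ < 2 ^ Fintype.card V := hE
    _ = #(univ : Finset (V → Bool)) := by simp
  obtain ⟨c, -, hc⟩ := exists_mem_notMem_of_card_lt_card hbad
  refine ⟨c, fun e he => ?_⟩
  simp only [bad, mem_biUnion, mem_filter, mem_univ, true_and, not_exists, not_and] at hc
  simpa [not_or, not_forall, and_comm] using hc e he

theorem erdos_lower_bound_general (n : ℕ) (V : Type) [Fintype V]
    (E : Finset (Finset V)) (hunif : ∀ e ∈ E, e.card = n)
    (hm : E.card < 2 ^ (n - 1)) :
    ∃ c : V → Bool, ∀ e ∈ E, (∃ x ∈ e, c x = true) ∧ (∃ x ∈ e, c x = false) := by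
  apply exists_bicoloring_of_sum_lt
  rw [sum_congr rfl fun e he => by rw [hunif e he], sum_const, smul_eq_mul]
  obtain rfl | ⟨e, he⟩ := E.eq_empty_or_nonempty
  · simp
  have hnV : n ≤ Fintype.card V := hunif e he ▸ card_le_univ e
  have hn : n ≠ 0 := by
    rintro rfl
    simp_all
  calc #E * 2 ^ (Fintype.card V - n + 1)
      < 2 ^ (n - 1) * 2 ^ (Fintype.card V - n + 1) := by gcongr
    _ = 2 ^ Fintype.card V := by rw [← pow_add]; congr 1; omega

/-- Erdős' bound: an `n`-uniform hypergraph with fewer than `2^(n-1)` edges has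
property B (is 2-colorable); equivalently `m(n) ≥ 2^(n-1)`. -/
theorem erdos_lower_bound (n : ℕ) (V : Type) [Fintype V] [DecidableEq V]
    (E : Finset (Finset V)) (hunif : ∀ e ∈ E, e.card = n)
    (hm : E.card < 2 ^ (n - 1)) :
    ∃ c : V → Bool, ∀ e ∈ E, (∃ x ∈ e, c x = true) ∧ (∃ x ∈ e, c x = false) :=
  erdos_lower_bound_general n V E hunif hm
end

section
/- If an n-uniform hypergraph H on a vertex set V of size v has the property that every pair of distinct vertices is contained in at least one edge, then the number of edges m satisfies m ≥ ⌈(v/n)·⌈(v-1)/(n-1)⌉⌉ (Schoenheim bound). -/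
/-- Schoenheim bound: if every pair of distinct vertices of an `n`-uniform
hypergraph on `v` vertices is covered by some edge, then
`m ≥ ⌈(v/n)·⌈(v-1)/(n-1)⌉⌉`. -/
theorem schoenheim_bound (n : ℕ) (hn : 2 ≤ n) (V : Type) [Fintype V] [DecidableEq V]
    (hv : 2 ≤ Fintype.card V)
    (E : Finset (Finset V)) (hunif : ∀ e ∈ E, e.card = n)
    (hcov : ∀ i j : V, i ≠ j → ∃ e ∈ E, i ∈ e ∧ j ∈ e) :
    (⌈(Fintype.card V : ℚ) / n *
      ⌈((Fintype.card V : ℚ) - 1) / ((n : ℚ) - 1)⌉⌉ : ℤ) ≤ (E.card : ℤ) := by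
  classical
  set v := Fintype.card V with hvdef
  set m := E.card with hmdef
  set deg : V → ℕ := fun x => (E.filter (fun e => x ∈ e)).card with hdeg
  have hn1 : (0:ℚ) < (n:ℚ) - 1 := by
    have : (2:ℚ) ≤ n := by exact_mod_cast hn
    linarith
  have hn0 : (0:ℚ) < (n:ℚ) := by linarith
  set C : ℤ := ⌈((v : ℚ) - 1) / ((n : ℚ) - 1)⌉ with hC
  -- degree lower bound (in ℕ)
  have hdegN : ∀ x : V, v - 1 ≤ deg x * (n - 1) := by
    intro x
    have hsub : Finset.univ.erase x ⊆
        (E.filter (fun e => x ∈ e)).biUnion (fun e => e.erase x) := by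
      intro y hy
      rw [Finset.mem_erase] at hy
      obtain ⟨e, he, hye, hxe⟩ := hcov y x hy.1
      simp only [Finset.mem_biUnion, Finset.mem_filter, Finset.mem_erase]
      exact ⟨e, ⟨he, hxe⟩, hy.1, hye⟩
    have h1 : (Finset.univ.erase x).card = v - 1 := by
      rw [Finset.card_erase_of_mem (Finset.mem_univ x), Finset.card_univ]
    have h2 : ((E.filter (fun e => x ∈ e)).biUnion (fun e => e.erase x)).card ≤
        ∑ e ∈ E.filter (fun e => x ∈ e), (e.erase x).card :=
      Finset.card_biUnion_le
    have h3 : ∑ e ∈ E.filter (fun e => x ∈ e), (e.erase x).card = deg x * (n - 1) := by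
      rw [Finset.sum_congr rfl (fun e he => ?_), Finset.sum_const, smul_eq_mul]
      rw [Finset.mem_filter] at he
      rw [Finset.card_erase_of_mem he.2, hunif e he.1]
    calc v - 1 = (Finset.univ.erase x).card := h1.symm
      _ ≤ _ := Finset.card_le_card hsub
      _ ≤ _ := h2
      _ = _ := h3
  -- degree lower bound in ℚ via ceiling
  have hdegQ : ∀ x : V, (C : ℚ) ≤ (deg x : ℚ) := by
    intro x
    have : ((v : ℚ) - 1) / ((n : ℚ) - 1) ≤ (deg x : ℚ) := by
      rw [div_le_iff₀ hn1]
      have := hdegN x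
      have hcast : ((v - 1 : ℕ) : ℚ) ≤ ((deg x * (n - 1) : ℕ) : ℚ) := by exact_mod_cast this
      push_cast [Nat.cast_sub (by omega : 1 ≤ v), Nat.cast_sub (by omega : 1 ≤ n)] at hcast
      linarith
    have h : C ≤ ((deg x : ℤ)) := Int.ceil_le.mpr (by push_cast; exact this)
    have h2 : (C : ℚ) ≤ ((deg x : ℤ) : ℚ) := by exact_mod_cast h
    push_cast at h2
    exact h2
  -- sum of degrees equals m * n
  have hsum : ∑ x : V, deg x = m * n := by
    simp only [hdeg, Finset.card_filter]
    rw [Finset.sum_comm]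
    have : ∀ e ∈ E, (∑ x : V, if x ∈ e then 1 else 0) = n := by
      intro e he
      rw [← Finset.card_filter, Finset.filter_mem_eq_inter, Finset.univ_inter, hunif e he]
    rw [Finset.sum_congr rfl this, Finset.sum_const, smul_eq_mul]
  -- combine
  have hmain : (v : ℚ) * C ≤ (m : ℚ) * n := by
    have h1 : (v : ℚ) * C = ∑ _x : V, (C : ℚ) := by
      rw [Finset.sum_const, Finset.card_univ, nsmul_eq_mul]
    have h2 : ∑ x : V, ((deg x : ℚ)) = (m : ℚ) * n := by
      rw [← Nat.cast_sum]; exact_mod_cast congrArg (Nat.cast : ℕ → ℚ) hsum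
    rw [h1, ← h2]
    exact Finset.sum_le_sum (fun x _ => hdegQ x)
  rw [Int.ceil_le]
  rw [div_mul_eq_mul_div, div_le_iff₀ hn0]
  push_cast
  exact hmain
end

section
/- If an n-uniform hypergraph H is 2-colorable, then there exists a linear order on its vertices such that the greedy coloring with respect to that order produces a proper 2-coloring (no monochromatic edge). -/
/-!
Order the vertices so that every vertex of colour `false` precedes every vertex of colour `true`.
A vertex turns blue only as the maximum of an edge, and every edge contains a `true` vertex,
so every blue vertex has colour `true`; hence the `false` vertex of each edge stays red. Every
edge also gets a blue vertex, for any order: if all its vertices stayed red, its maximum would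
turn blue.
-/

/-- Greedy coloring of the hypergraph `E` with respect to the linear order `L`:
all vertices start red; scanning vertices in increasing order, a vertex is
recolored blue iff it is the maximal vertex of some edge all of whose other
(hence earlier) vertices are currently red. `greedyBlue L E x` states that `x`
ends up blue. -/
def greedyBlue {V : Type} [Fintype V] (L : LinearOrder V)
    (E : Finset (Finset V)) : V → Prop :=
  letI := L
  WellFounded.fix
    (Finite.wellFounded_of_trans_of_irrefl (· < · : V → V → Prop))
    (fun v ih => ∃ e ∈ E, v ∈ e ∧ (∀ w ∈ e, w ≤ v) ∧
      ∀ w ∈ e, (h : w < v) → ¬ ih w h)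

theorem exists_linearOrder_monotone {V α : Type*} [LinearOrder α] (f : V → α) :
    ∃ L : LinearOrder V, @Monotone V α L.toPreorder _ f := by
  let _ : LinearOrder V := IsWellOrder.linearOrder WellOrderingRel
  let g : V → α ×ₗ V := fun v => toLex (f v, v)
  have hg : Function.Injective g := fun a b h => congrArg (fun p => (ofLex p).2) h
  exact ⟨LinearOrder.lift' g hg, fun a b hab => Prod.Lex.monotone_fst (g a) (g b) hab⟩

section Greedy

variable {V : Type} [Fintype V] [L : LinearOrder V] {E : Finset (Finset V)}

theorem greedyBlue_iff (v : V) :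
    greedyBlue L E v ↔ ∃ e ∈ E, v ∈ e ∧ (∀ w ∈ e, w ≤ v) ∧ ∀ w ∈ e, w < v → ¬ greedyBlue L E w := by
  unfold greedyBlue
  rw [WellFounded.fix_eq]

theorem exists_greedyBlue_of_mem {e : Finset V} (he : e ∈ E) (hne : e.Nonempty) :
    ∃ x ∈ e, greedyBlue L E x := by
  by_contra! hred
  exact hred _ (e.max'_mem hne) ((greedyBlue_iff _).2
    ⟨e, he, e.max'_mem hne, fun w hw => e.le_max' w hw, fun w hw _ => hred w hw⟩)

theorem mem_of_greedyBlue_of_isUpperSet {S : Set V} (hS : IsUpperSet S)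
    (hmeet : ∀ e ∈ E, ∃ x ∈ e, x ∈ S) {v : V} (hv : greedyBlue L E v) : v ∈ S := by
  obtain ⟨e, he, -, hmax, -⟩ := (greedyBlue_iff v).1 hv
  obtain ⟨x, hxe, hxS⟩ := hmeet e he
  exact hS (hmax x hxe) hxS

end Greedy

theorem greedy_succeeds_of_colorable_general (V : Type) [Fintype V]
    (E : Finset (Finset V))
    (hB : ∃ c : V → Bool, ∀ e ∈ E, (∃ x ∈ e, c x = true) ∧ (∃ x ∈ e, c x = false)) :
    ∃ L : LinearOrder V, ∀ e ∈ E,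
      (∃ x ∈ e, greedyBlue L E x) ∧ (∃ x ∈ e, ¬ greedyBlue L E x) := by
  obtain ⟨c, hc⟩ := hB
  obtain ⟨L, hmono⟩ := exists_linearOrder_monotone c
  let _ := L
  have htrue_upper : IsUpperSet {v | c v = true} := fun a b hab (ha : c a = true) =>
    top_le_iff.1 (ha ▸ hmono hab : true ≤ c b)
  have hblue_true : ∀ v, greedyBlue L E v → c v = true := fun _ =>
    mem_of_greedyBlue_of_isUpperSet htrue_upper fun e he => (hc e he).1
  refine ⟨L, fun e he => ⟨?_, ?_⟩⟩
  · obtain ⟨x, hx, -⟩ := (hc e he).1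
    exact exists_greedyBlue_of_mem he ⟨x, hx⟩
  · obtain ⟨x, hx, hcx⟩ := (hc e he).2
    exact ⟨x, hx, fun hb => by simp [hblue_true x hb] at hcx⟩

/-- If an `n`-uniform hypergraph is 2-colorable, then there is a linear order
on its vertices for which the greedy coloring is a proper 2-coloring. -/
theorem greedy_succeeds_of_colorable (n : ℕ) (V : Type) [Fintype V]
    (E : Finset (Finset V)) (hunif : ∀ e ∈ E, e.card = n)
    (hB : ∃ c : V → Bool, ∀ e ∈ E, (∃ x ∈ e, c x = true) ∧ (∃ x ∈ e, c x = false)) :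
    ∃ L : LinearOrder V, ∀ e ∈ E,
      (∃ x ∈ e, greedyBlue L E x) ∧ (∃ x ∈ e, ¬ greedyBlue L E x) :=
  greedy_succeeds_of_colorable_general V E hB
end

section
/- Let σ be a uniformly random permutation of a v-element vertex set of an n-uniform hypergraph with m edges, and let γ be the number of ordered pairs of edges sharing exactly one vertex. Then the probability that the vertex in position k (1 ≤ k ≤ v) is simultaneously the last vertex of some edge and the first vertex of some other edge sharing only that vertex with it is at most (1/v)·min( m·n·C(k-1,n-1)/C(v-1,n-1), m·n·C(v-k,n-1)/C(v-1,n-1), γ·C(k-1,n-1)·C(v-k,n-1)/(C(v-1,n-1)·C(v-n,n-1)) ). -/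
open scoped Classical

private lemma card_equiv_le {X Y : Type*} [Fintype X] [Fintype Y] [DecidableEq X] [DecidableEq Y] :
    Fintype.card (X ≃ Y) ≤ (Fintype.card X).factorial := by
  by_cases h : Nonempty (X ≃ Y)
  · obtain ⟨e⟩ := h
    rw [Fintype.card_equiv e]
  · rw [Fintype.card_eq_zero_iff.mpr ⟨fun e => h ⟨e⟩⟩]
    exact Nat.zero_le _

private lemma card_fiber_le {α β ι : Type*} [Fintype α] [Fintype β] [Fintype ι]
    [DecidableEq α] [DecidableEq β] [DecidableEq ι] (κ : α → ι) (lam : β → ι) :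
    (Finset.univ.filter fun σ : α ≃ β => ∀ a, lam (σ a) = κ a).card ≤
      ∏ i, (Fintype.card {a // κ a = i}).factorial := by
  rw [← Fintype.card_subtype]
  have hinj : Function.Injective
      (fun (σ : {σ : α ≃ β // ∀ a, lam (σ a) = κ a}) (i : ι) =>
        (σ.1.subtypeEquiv (fun a => by rw [σ.2 a]) : {a // κ a = i} ≃ {b // lam b = i})) := by
    intro σ τ h
    apply Subtype.ext
    apply Equiv.ext
    intro a
    have h2 := congrFun h (κ a)
    have h3 := congrArg (fun e : ({x // κ x = κ a} ≃ {b // lam b = κ a}) =>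
      (e ⟨a, rfl⟩ : {b // lam b = κ a}).1) h2
    simpa [Equiv.subtypeEquiv] using h3
  calc Fintype.card {σ : α ≃ β // ∀ a, lam (σ a) = κ a}
      ≤ Fintype.card (∀ i, {a // κ a = i} ≃ {b // lam b = i}) :=
        Fintype.card_le_of_injective _ hinj
    _ = ∏ i, Fintype.card ({a // κ a = i} ≃ {b // lam b = i}) := Fintype.card_pi
    _ ≤ ∏ i, (Fintype.card {a // κ a = i}).factorial :=
        Finset.prod_le_prod' (fun i _ => card_equiv_le)

private lemma card_powersetCard_filter_mem {α : Type*} [DecidableEq α] (s : Finset α) (x : α)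
    (hx : x ∈ s) (r : ℕ) :
    (((s.powersetCard (r + 1)).filter fun T => x ∈ T)).card = (s.card - 1).choose r := by
  rw [← Finset.card_erase_of_mem hx, ← Finset.card_powersetCard r (s.erase x)]
  apply Finset.card_bij' (fun T _ => T.erase x) (fun U _ => insert x U)
  · intro T hT
    simp only [Finset.mem_filter] at hT
    exact Finset.insert_erase hT.2
  · intro U hU
    simp only [Finset.mem_powersetCard] at hU
    have hxU : x ∉ U := fun h => (Finset.mem_erase.mp (hU.1 h)).1 rfl
    exact Finset.erase_insert hxU
  · intro T hT
    simp only [Finset.mem_filter, Finset.mem_powersetCard] at hT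
    simp only [Finset.mem_powersetCard]
    exact ⟨Finset.erase_subset_erase x hT.1.1,
      by rw [Finset.card_erase_of_mem hT.2, hT.1.2]; omega⟩
  · intro U hU
    simp only [Finset.mem_powersetCard] at hU
    have hxU : x ∉ U := fun h => (Finset.mem_erase.mp (hU.1 h)).1 rfl
    simp only [Finset.mem_filter, Finset.mem_powersetCard]
    refine ⟨⟨?_, ?_⟩, Finset.mem_insert_self x U⟩
    · intro y hy
      rcases Finset.mem_insert.mp hy with rfl | hy
      · exact hx
      · exact (Finset.mem_erase.mp (hU.1 hy)).2
    · rw [Finset.card_insert_of_notMem hxU, hU.2]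

private lemma count_one_edge {V : Type} [Fintype V] [DecidableEq V] {v n : ℕ}
    (hv : Fintype.card V = v) (A : Finset V) (T : Finset (Fin v)) (hT : T.card = n) :
    (Finset.univ.filter fun σ : Fin v ≃ V =>
      ∀ i, decide (σ i ∈ A) = decide (i ∈ T)).card ≤
      n.factorial * (v - n).factorial := by
  have key := card_fiber_le (fun i : Fin v => decide (i ∈ T)) (fun b : V => decide (b ∈ A))
  rw [Fintype.prod_bool] at key
  have h1 : Fintype.card {i : Fin v // decide (i ∈ T) = true} = n := by
    rw [Fintype.card_subtype]
    rw [show (Finset.univ.filter fun i : Fin v => decide (i ∈ T) = true) = T by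
      ext i; simp]
    exact hT
  have h2 : Fintype.card {i : Fin v // decide (i ∈ T) = false} = v - n := by
    rw [Fintype.card_subtype]
    rw [show (Finset.univ.filter fun i : Fin v => decide (i ∈ T) = false) = Tᶜ by
      ext i; simp]
    rw [Finset.card_compl, hT, Fintype.card_fin]
  rw [h1, h2] at key
  exact le_trans (le_of_eq (by congr)) key

private lemma count_two_edges {V : Type} [Fintype V] [DecidableEq V] {v n : ℕ}
    (hv : Fintype.card V = v) (A B : Finset V) (T₁ T₂ : Finset (Fin v))
    (h1 : T₁.card = n) (h2 : T₂.card = n) (hi : (T₁ ∩ T₂).card = 1) :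
    (Finset.univ.filter fun σ : Fin v ≃ V =>
      ∀ i, (decide (σ i ∈ A), decide (σ i ∈ B)) = (decide (i ∈ T₁), decide (i ∈ T₂))).card ≤
      (n - 1).factorial * ((n - 1).factorial * (v - (2 * n - 1)).factorial) := by
  have key := card_fiber_le (fun i : Fin v => (decide (i ∈ T₁), decide (i ∈ T₂)))
    (fun b : V => (decide (b ∈ A), decide (b ∈ B)))
  simp only [Fintype.prod_prod_type, Fintype.prod_bool] at key
  have hn1 : 1 ≤ n := by
    have : (T₁ ∩ T₂).card ≤ T₁.card := Finset.card_le_card (Finset.inter_subset_left)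
    omega
  have e11 : Fintype.card {i : Fin v // (decide (i ∈ T₁), decide (i ∈ T₂)) = (true, true)} = 1 := by
    rw [Fintype.card_subtype]
    rw [show (Finset.univ.filter fun i : Fin v =>
        (decide (i ∈ T₁), decide (i ∈ T₂)) = (true, true)) = T₁ ∩ T₂ by
      ext i; simp [Prod.ext_iff, Finset.mem_inter]]
    exact hi
  have e10 : Fintype.card {i : Fin v // (decide (i ∈ T₁), decide (i ∈ T₂)) = (true, false)}
      = n - 1 := by
    rw [Fintype.card_subtype]
    rw [show (Finset.univ.filter fun i : Fin v =>
        (decide (i ∈ T₁), decide (i ∈ T₂)) = (true, false)) = T₁ \ T₂ by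
      ext i; simp [Prod.ext_iff, Finset.mem_sdiff]]
    have hs := Finset.card_sdiff_add_card_inter T₁ T₂
    omega
  have e01 : Fintype.card {i : Fin v // (decide (i ∈ T₁), decide (i ∈ T₂)) = (false, true)}
      = n - 1 := by
    rw [Fintype.card_subtype]
    rw [show (Finset.univ.filter fun i : Fin v =>
        (decide (i ∈ T₁), decide (i ∈ T₂)) = (false, true)) = T₂ \ T₁ by
      ext i; simp [Prod.ext_iff, Finset.mem_sdiff]; tauto]
    have := Finset.card_sdiff_add_card_inter T₂ T₁
    rw [Finset.inter_comm] at this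
    omega
  have e00 : Fintype.card {i : Fin v // (decide (i ∈ T₁), decide (i ∈ T₂)) = (false, false)}
      = v - (2 * n - 1) := by
    rw [Fintype.card_subtype]
    rw [show (Finset.univ.filter fun i : Fin v =>
        (decide (i ∈ T₁), decide (i ∈ T₂)) = (false, false)) = (T₁ ∪ T₂)ᶜ by
      ext i; simp [Prod.ext_iff, Finset.mem_union]]
    rw [Finset.card_compl, Fintype.card_fin]
    have := Finset.card_union_add_card_inter T₁ T₂
    omega
  rw [e11, e10, e01, e00] at key
  refine le_trans (le_of_eq (by congr)) (le_trans key (le_of_eq ?_))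
  simp [Nat.factorial]

private lemma main_bound (n v m k : ℕ) (hk1 : 1 ≤ k) (hk2 : k ≤ v)
    (V : Type) [Fintype V] [DecidableEq V] (hv : Fintype.card V = v)
    (E : Finset (Finset V)) (hunif : ∀ e ∈ E, e.card = n) (hm : E.card = m)
    (γ : ℕ)
    (hγ : γ = ((E ×ˢ E).filter fun p => p.1 ≠ p.2 ∧ (p.1 ∩ p.2).card = 1).card)
    (p : Fin v) (hp : (p : ℕ) = k - 1) :
    ((Finset.univ.filter fun σ : Fin v ≃ V =>
        ∃ A ∈ E, ∃ B ∈ E, A ≠ B ∧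
          A ∩ B = {σ p} ∧
          (∀ w ∈ A, σ.symm w ≤ p) ∧
          (∀ w ∈ B, p ≤ σ.symm w)).card : ℚ)
      / (Nat.factorial v) ≤
    (1 / v) * min (min
      ((m * n * Nat.choose (k - 1) (n - 1) : ℚ) / Nat.choose (v - 1) (n - 1))
      ((m * n * Nat.choose (v - k) (n - 1) : ℚ) / Nat.choose (v - 1) (n - 1)))
      ((γ * Nat.choose (k - 1) (n - 1) * Nat.choose (v - k) (n - 1) : ℚ)
        / (Nat.choose (v - 1) (n - 1) * Nat.choose (v - n) (n - 1))) := by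
  set P : Finset (Fin v ≃ V) := Finset.univ.filter fun σ : Fin v ≃ V =>
        ∃ A ∈ E, ∃ B ∈ E, A ≠ B ∧
          A ∩ B = {σ p} ∧
          (∀ w ∈ A, σ.symm w ≤ p) ∧
          (∀ w ∈ B, p ≤ σ.symm w) with hP
  by_cases hne : P.Nonempty
  swap
  · rw [Finset.not_nonempty_iff_eq_empty.mp hne]
    simp only [Finset.card_empty, Nat.cast_zero, zero_div]
    have h0v : (0:ℚ) ≤ 1 / v := by positivity
    refine mul_nonneg h0v (le_min (le_min ?_ ?_) ?_) <;> positivity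
  obtain ⟨σ₀, hσ₀mem⟩ := hne
  rw [hP, Finset.mem_filter] at hσ₀mem
  obtain ⟨-, A₀, hA₀, B₀, hB₀, hAB₀, hcap₀, hlast₀, hfirst₀⟩ := hσ₀mem
  have hσpA₀ : σ₀ p ∈ A₀ := by
    have h : σ₀ p ∈ A₀ ∩ B₀ := by rw [hcap₀]; exact Finset.mem_singleton_self _
    exact (Finset.mem_inter.mp h).1
  have hσpB₀ : σ₀ p ∈ B₀ := by
    have h : σ₀ p ∈ A₀ ∩ B₀ := by rw [hcap₀]; exact Finset.mem_singleton_self _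
    exact (Finset.mem_inter.mp h).2
  have hn1 : 1 ≤ n := by
    rw [← hunif A₀ hA₀]
    exact Finset.card_pos.mpr ⟨_, hσpA₀⟩
  have himgcard : ∀ (σ : Fin v ≃ V) (X : Finset V), (X.image σ.symm).card = X.card :=
    fun σ X => Finset.card_image_of_injective X σ.symm.injective
  have hIic : (Finset.Iic p).card = k := by rw [Fin.card_Iic, hp]; omega
  have hIci : (Finset.Ici p).card = v - k + 1 := by rw [Fin.card_Ici, hp]; omega
  have hnk : n ≤ k := by
    have hsub : A₀.image σ₀.symm ⊆ Finset.Iic p := by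
      intro i hi
      obtain ⟨w, hw, rfl⟩ := Finset.mem_image.mp hi
      exact Finset.mem_Iic.mpr (hlast₀ w hw)
    have := Finset.card_le_card hsub
    rw [himgcard, hunif A₀ hA₀, hIic] at this
    exact this
  have hnvk : n ≤ v - k + 1 := by
    have hsub : B₀.image σ₀.symm ⊆ Finset.Ici p := by
      intro i hi
      obtain ⟨w, hw, rfl⟩ := Finset.mem_image.mp hi
      exact Finset.mem_Ici.mpr (hfirst₀ w hw)
    have := Finset.card_le_card hsub
    rw [himgcard, hunif B₀ hB₀, hIci] at this
    exact this
  have h2n : 2 * n - 1 ≤ v := by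
    have hcup := Finset.card_union_add_card_inter A₀ B₀
    rw [hcap₀, Finset.card_singleton, hunif A₀ hA₀, hunif B₀ hB₀] at hcup
    have := Finset.card_le_univ (A₀ ∪ B₀)
    rw [hv] at this
    omega
  have hc1 : 0 < (k-1).choose (n-1) := Nat.choose_pos (by omega)
  have hc2 : 0 < (v-k).choose (n-1) := Nat.choose_pos (by omega)
  have hc3 : 0 < (v-1).choose (n-1) := Nat.choose_pos (by omega)
  have hc4 : 0 < (v-n).choose (n-1) := Nat.choose_pos (by omega)
  -- the families of admissible position sets
  set TA : Finset (Finset (Fin v)) := ((Finset.Iic p).powersetCard n).filter (fun T => p ∈ T)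
    with hTA
  set TB : Finset (Finset (Fin v)) := ((Finset.Ici p).powersetCard n).filter (fun T => p ∈ T)
    with hTB
  have hTAcard : TA.card = (k-1).choose (n-1) := by
    have h := card_powersetCard_filter_mem (Finset.Iic p) p (Finset.mem_Iic.mpr le_rfl) (n-1)
    rw [show n - 1 + 1 = n by omega, hIic] at h
    exact h
  have hTBcard : TB.card = (v-k).choose (n-1) := by
    have h := card_powersetCard_filter_mem (Finset.Ici p) p (Finset.mem_Ici.mpr le_rfl) (n-1)
    rw [show n - 1 + 1 = n by omega, hIci, show v - k + 1 - 1 = v - k by omega] at h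
    exact h
  have hTAmem : ∀ T ∈ TA, T.card = n ∧ (∀ x ∈ T, x ≤ p) ∧ p ∈ T := by
    intro T hT
    rw [hTA, Finset.mem_filter, Finset.mem_powersetCard] at hT
    exact ⟨hT.1.2, fun x hx => Finset.mem_Iic.mp (hT.1.1 hx), hT.2⟩
  have hTBmem : ∀ T ∈ TB, T.card = n ∧ (∀ x ∈ T, p ≤ x) ∧ p ∈ T := by
    intro T hT
    rw [hTB, Finset.mem_filter, Finset.mem_powersetCard] at hT
    exact ⟨hT.1.2, fun x hx => Finset.mem_Ici.mp (hT.1.1 hx), hT.2⟩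
  -- membership of image sets
  have himgmemA : ∀ (σ : Fin v ≃ V) (A B : Finset V), A ∈ E → A ∩ B = {σ p} →
      (∀ w ∈ A, σ.symm w ≤ p) → A.image σ.symm ∈ TA := by
    intro σ A B hA hcap hlast
    have hσpA : σ p ∈ A := by
      have h : σ p ∈ A ∩ B := by rw [hcap]; exact Finset.mem_singleton_self _
      exact (Finset.mem_inter.mp h).1
    rw [hTA]
    refine Finset.mem_filter.mpr ⟨Finset.mem_powersetCard.mpr ⟨?_, ?_⟩, ?_⟩
    · intro i hi
      obtain ⟨w, hw, rfl⟩ := Finset.mem_image.mp hi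
      exact Finset.mem_Iic.mpr (hlast w hw)
    · rw [himgcard, hunif A hA]
    · exact Finset.mem_image.mpr ⟨σ p, hσpA, Equiv.symm_apply_apply σ p⟩
  have himgmemB : ∀ (σ : Fin v ≃ V) (A B : Finset V), B ∈ E → A ∩ B = {σ p} →
      (∀ w ∈ B, p ≤ σ.symm w) → B.image σ.symm ∈ TB := by
    intro σ A B hB hcap hfirst
    have hσpB : σ p ∈ B := by
      have h : σ p ∈ A ∩ B := by rw [hcap]; exact Finset.mem_singleton_self _
      exact (Finset.mem_inter.mp h).2
    rw [hTB]
    refine Finset.mem_filter.mpr ⟨Finset.mem_powersetCard.mpr ⟨?_, ?_⟩, ?_⟩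
    · intro i hi
      obtain ⟨w, hw, rfl⟩ := Finset.mem_image.mp hi
      exact Finset.mem_Ici.mpr (hfirst w hw)
    · rw [himgcard, hunif B hB]
    · exact Finset.mem_image.mpr ⟨σ p, hσpB, Equiv.symm_apply_apply σ p⟩
  have himgiff : ∀ (σ : Fin v ≃ V) (X : Finset V) (i : Fin v),
      σ i ∈ X ↔ i ∈ X.image σ.symm := by
    intro σ X i
    constructor
    · intro h; exact Finset.mem_image.mpr ⟨σ i, h, Equiv.symm_apply_apply σ i⟩
    · intro h
      obtain ⟨w, hw, hwi⟩ := Finset.mem_image.mp h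
      have : σ i = w := by rw [← hwi, Equiv.apply_symm_apply]
      rwa [this]
  -- Bound 1
  have hcount1 : P.card ≤ m * ((k-1).choose (n-1) * (n.factorial * (v-n).factorial)) := by
    have hsub : P ⊆ (E ×ˢ TA).biUnion (fun q => Finset.univ.filter fun σ : Fin v ≃ V =>
        ∀ i, decide (σ i ∈ q.1) = decide (i ∈ q.2)) := by
      intro σ hσ
      rw [hP, Finset.mem_filter] at hσ
      obtain ⟨-, A, hA, B, hB, hAB, hcap, hlast, hfirst⟩ := hσ
      refine Finset.mem_biUnion.mpr ⟨(A, A.image σ.symm),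
        Finset.mem_product.mpr ⟨hA, himgmemA σ A B hA hcap hlast⟩, ?_⟩
      refine Finset.mem_filter.mpr ⟨Finset.mem_univ _, fun i => ?_⟩
      exact decide_eq_decide.mpr (himgiff σ A i)
    calc P.card ≤ ∑ q ∈ E ×ˢ TA, (Finset.univ.filter fun σ : Fin v ≃ V =>
          ∀ i, decide (σ i ∈ q.1) = decide (i ∈ q.2)).card :=
        le_trans (Finset.card_le_card hsub) Finset.card_biUnion_le
      _ ≤ ∑ _q ∈ E ×ˢ TA, n.factorial * (v - n).factorial := by
          refine Finset.sum_le_sum (fun q hq => ?_)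
          have hq' := Finset.mem_product.mp hq
          exact count_one_edge hv q.1 q.2 (hTAmem q.2 hq'.2).1
      _ = (E.card * TA.card) * (n.factorial * (v-n).factorial) := by
          rw [Finset.sum_const, Finset.card_product, smul_eq_mul]
      _ = m * ((k-1).choose (n-1) * (n.factorial * (v-n).factorial)) := by
          rw [hm, hTAcard]; ring
  -- Bound 2
  have hcount2 : P.card ≤ m * ((v-k).choose (n-1) * (n.factorial * (v-n).factorial)) := by
    have hsub : P ⊆ (E ×ˢ TB).biUnion (fun q => Finset.univ.filter fun σ : Fin v ≃ V =>
        ∀ i, decide (σ i ∈ q.1) = decide (i ∈ q.2)) := by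
      intro σ hσ
      rw [hP, Finset.mem_filter] at hσ
      obtain ⟨-, A, hA, B, hB, hAB, hcap, hlast, hfirst⟩ := hσ
      refine Finset.mem_biUnion.mpr ⟨(B, B.image σ.symm),
        Finset.mem_product.mpr ⟨hB, himgmemB σ A B hB hcap hfirst⟩, ?_⟩
      refine Finset.mem_filter.mpr ⟨Finset.mem_univ _, fun i => ?_⟩
      exact decide_eq_decide.mpr (himgiff σ B i)
    calc P.card ≤ ∑ q ∈ E ×ˢ TB, (Finset.univ.filter fun σ : Fin v ≃ V =>
          ∀ i, decide (σ i ∈ q.1) = decide (i ∈ q.2)).card :=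
        le_trans (Finset.card_le_card hsub) Finset.card_biUnion_le
      _ ≤ ∑ _q ∈ E ×ˢ TB, n.factorial * (v - n).factorial := by
          refine Finset.sum_le_sum (fun q hq => ?_)
          have hq' := Finset.mem_product.mp hq
          exact count_one_edge hv q.1 q.2 (hTBmem q.2 hq'.2).1
      _ = (E.card * TB.card) * (n.factorial * (v-n).factorial) := by
          rw [Finset.sum_const, Finset.card_product, smul_eq_mul]
      _ = m * ((v-k).choose (n-1) * (n.factorial * (v-n).factorial)) := by
          rw [hm, hTBcard]; ring
  -- Bound 3
  set Epairs : Finset (Finset V × Finset V) :=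
    (E ×ˢ E).filter (fun q => q.1 ≠ q.2 ∧ (q.1 ∩ q.2).card = 1) with hEp
  have hcount3 : P.card ≤ γ * ((k-1).choose (n-1) * (v-k).choose (n-1)) *
      ((n-1).factorial * ((n-1).factorial * (v - (2*n-1)).factorial)) := by
    have hsub : P ⊆ (Epairs ×ˢ (TA ×ˢ TB)).biUnion
        (fun q => Finset.univ.filter fun σ : Fin v ≃ V =>
          ∀ i, (decide (σ i ∈ q.1.1), decide (σ i ∈ q.1.2))
            = (decide (i ∈ q.2.1), decide (i ∈ q.2.2))) := by
      intro σ hσ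
      rw [hP, Finset.mem_filter] at hσ
      obtain ⟨-, A, hA, B, hB, hAB, hcap, hlast, hfirst⟩ := hσ
      refine Finset.mem_biUnion.mpr ⟨((A, B), (A.image σ.symm, B.image σ.symm)), ?_, ?_⟩
      · refine Finset.mem_product.mpr ⟨?_, Finset.mem_product.mpr
          ⟨himgmemA σ A B hA hcap hlast, himgmemB σ A B hB hcap hfirst⟩⟩
        rw [hEp]
        refine Finset.mem_filter.mpr ⟨Finset.mem_product.mpr ⟨hA, hB⟩, hAB, ?_⟩
        rw [hcap]; exact Finset.card_singleton _
      · refine Finset.mem_filter.mpr ⟨Finset.mem_univ _, fun i => ?_⟩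
        simp only [Prod.mk.injEq]
        exact ⟨decide_eq_decide.mpr (himgiff σ A i), decide_eq_decide.mpr (himgiff σ B i)⟩
    calc P.card ≤ ∑ q ∈ Epairs ×ˢ (TA ×ˢ TB),
          (Finset.univ.filter fun σ : Fin v ≃ V =>
            ∀ i, (decide (σ i ∈ q.1.1), decide (σ i ∈ q.1.2))
              = (decide (i ∈ q.2.1), decide (i ∈ q.2.2))).card :=
        le_trans (Finset.card_le_card hsub) Finset.card_biUnion_le
      _ ≤ ∑ _q ∈ Epairs ×ˢ (TA ×ˢ TB),
            (n-1).factorial * ((n-1).factorial * (v - (2*n-1)).factorial) := by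
          refine Finset.sum_le_sum (fun q hq => ?_)
          have hq' := Finset.mem_product.mp hq
          have hq'' := Finset.mem_product.mp hq'.2
          have hT1 := hTAmem q.2.1 hq''.1
          have hT2 := hTBmem q.2.2 hq''.2
          have hsingle : q.2.1 ∩ q.2.2 = {p} := by
            apply Finset.Subset.antisymm
            · intro x hx
              rw [Finset.mem_inter] at hx
              have h1 := hT1.2.1 x hx.1
              have h2 := hT2.2.1 x hx.2
              exact Finset.mem_singleton.mpr (le_antisymm h1 h2)
            · intro x hx
              rw [Finset.mem_singleton] at hx
              subst hx
              exact Finset.mem_inter.mpr ⟨hT1.2.2, hT2.2.2⟩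
          refine count_two_edges hv q.1.1 q.1.2 q.2.1 q.2.2 hT1.1 hT2.1 ?_
          rw [hsingle]; exact Finset.card_singleton _
      _ = (Epairs.card * (TA.card * TB.card)) *
            ((n-1).factorial * ((n-1).factorial * (v - (2*n-1)).factorial)) := by
          rw [Finset.sum_const, Finset.card_product, Finset.card_product, smul_eq_mul]
      _ = γ * ((k-1).choose (n-1) * (v-k).choose (n-1)) *
            ((n-1).factorial * ((n-1).factorial * (v - (2*n-1)).factorial)) := by
          rw [hγ, hEp, hTAcard, hTBcard]
  -- assembly
  have hvfac : (0:ℚ) < (v.factorial : ℚ) := by exact_mod_cast v.factorial_pos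
  have hv0 : 0 < v := by omega
  have hfinal : ∀ (N X D : ℕ), P.card ≤ N → N * (v * D) = X * v.factorial → 0 < D →
      (P.card : ℚ) / v.factorial ≤ (1/v) * ((X : ℚ) / D) := by
    intro N X D hN hE hD
    rw [div_mul_div_comm, one_mul]
    rw [div_le_div_iff₀ hvfac (by exact_mod_cast Nat.mul_pos hv0 hD)]
    have : P.card * (v * D) ≤ X * v.factorial := by
      calc P.card * (v * D) ≤ N * (v * D) := Nat.mul_le_mul_right _ hN
        _ = X * v.factorial := hE
    exact_mod_cast this
  obtain ⟨n', rfl⟩ : ∃ n', n = n' + 1 := ⟨n-1, by omega⟩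
  obtain ⟨v', rfl⟩ : ∃ v', v = v' + 1 := ⟨v-1, by omega⟩
  simp only [Nat.add_sub_cancel] at *
  have hch1 : (v').choose n' * n'.factorial * (v' - n').factorial = v'.factorial :=
    Nat.choose_mul_factorial_mul_factorial (by omega)
  have hch2 : (v' - n').choose n' * n'.factorial * ((v' - n') - n').factorial
      = (v' - n').factorial :=
    Nat.choose_mul_factorial_mul_factorial (by omega)
  have hb1 : ((P.card : ℚ)) / (v'+1).factorial ≤
      (1/((v'+1:ℕ):ℚ)) * (((m * (n'+1) * (k-1).choose n' : ℕ) : ℚ) / ((v').choose n' : ℕ)) := by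
    refine hfinal _ _ _ hcount1 ?_ hc3
    have hvn : v' + 1 - (n' + 1) = v' - n' := by omega
    rw [hvn, Nat.factorial_succ n', Nat.factorial_succ v', ← hch1]
    ring
  have hb2 : ((P.card : ℚ)) / (v'+1).factorial ≤
      (1/((v'+1:ℕ):ℚ)) * (((m * (n'+1) * (v'+1-k).choose n' : ℕ) : ℚ) / ((v').choose n' : ℕ)) := by
    refine hfinal _ _ _ hcount2 ?_ hc3
    have hvn : v' + 1 - (n' + 1) = v' - n' := by omega
    rw [hvn, Nat.factorial_succ n', Nat.factorial_succ v', ← hch1]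
    ring
  have hb3 : ((P.card : ℚ)) / (v'+1).factorial ≤
      (1/((v'+1:ℕ):ℚ)) * (((γ * (k-1).choose n' * (v'+1-k).choose n' : ℕ) : ℚ)
        / (((v').choose n' * (v'-n').choose n' : ℕ) : ℚ)) := by
    refine hfinal _ _ _ hcount3 ?_ (Nat.mul_pos hc3 (by simpa [show v'+1-(n'+1) = v'-n' by omega] using hc4))
    have hvn : v' + 1 - (2 * (n' + 1) - 1) = v' - n' - n' := by omega
    rw [hvn, Nat.factorial_succ v', ← hch1, ← hch2]
    ring
  have h0 : (0:ℚ) ≤ 1 / ((v'+1:ℕ):ℚ) := by positivity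
  rw [mul_min_of_nonneg _ _ h0, mul_min_of_nonneg _ _ h0]
  refine le_min (le_min ?_ ?_) ?_
  · refine le_trans hb1 (le_of_eq ?_)
    push_cast
    ring
  · refine le_trans hb2 (le_of_eq ?_)
    push_cast
    ring
  · refine le_trans hb3 (le_of_eq ?_)
    push_cast
    ring

/-- Bound on the probability (over a uniformly random permutation placing the
vertices in positions `1,…,v`) that the vertex in position `k` is the last
vertex of some edge and the first vertex of another edge meeting the first one
only in that vertex. -/
theorem critical_position_probability_bound (n v m k : ℕ) (hk1 : 1 ≤ k)
    (hk2 : k ≤ v) (V : Type) [Fintype V] [DecidableEq V]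
    (hv : Fintype.card V = v)
    (E : Finset (Finset V)) (hunif : ∀ e ∈ E, e.card = n) (hm : E.card = m)
    (γ : ℕ)
    (hγ : γ = ((E ×ˢ E).filter fun p => p.1 ≠ p.2 ∧ (p.1 ∩ p.2).card = 1).card) :
    ((Finset.univ.filter fun σ : Fin v ≃ V =>
        ∃ A ∈ E, ∃ B ∈ E, A ≠ B ∧
          A ∩ B = {σ ⟨k - 1, by omega⟩} ∧
          (∀ w ∈ A, σ.symm w ≤ (⟨k - 1, by omega⟩ : Fin v)) ∧
          (∀ w ∈ B, (⟨k - 1, by omega⟩ : Fin v) ≤ σ.symm w)).card : ℚ)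
      / (Nat.factorial v) ≤
    (1 / v) * min (min
      ((m * n * Nat.choose (k - 1) (n - 1) : ℚ) / Nat.choose (v - 1) (n - 1))
      ((m * n * Nat.choose (v - k) (n - 1) : ℚ) / Nat.choose (v - 1) (n - 1)))
      ((γ * Nat.choose (k - 1) (n - 1) * Nat.choose (v - k) (n - 1) : ℚ)
        / (Nat.choose (v - 1) (n - 1) * Nat.choose (v - n) (n - 1))) := by
  exact main_bound n v m k hk1 hk2 V hv E hunif hm γ hγ ⟨k - 1, by omega⟩ rfl
end

section
/- For an n-uniform hypergraph with m edges and vertex set V of size v, let l_i be the degree of vertex i (number of edges containing i) and r_i the maximum, over vertices j ≠ i, of the number of edges containing both i and j. Then γ ≤ Σ_{i∈V} ( l_i(l_i−1) − r_i(r_i−1) ), where γ is the number of ordered pairs of distinct edges intersecting in exactly one vertex. -/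
private lemma cast_sq_sub' (a : ℕ) :
    ((a * a - a : ℕ) : ℤ) = (a : ℤ) * (a : ℤ) - (a : ℤ) := by
  have h : a ≤ a * a := by
    cases a with
    | zero => simp
    | succ k => exact Nat.le_mul_of_pos_left _ (Nat.succ_pos k)
  push_cast [Nat.cast_sub h]
  ring

/-- Degree-based bound for the number `γ` of ordered pairs of distinct edges
meeting in exactly one vertex: `γ ≤ Σᵢ (lᵢ(lᵢ-1) - rᵢ(rᵢ-1))`, where `lᵢ` is the
degree of vertex `i` and `rᵢ` the maximal number of edges containing both `i`
and some other fixed vertex `j`. -/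
theorem gamma_bound_degrees (n : ℕ) (hn : 2 ≤ n) (V : Type) [Fintype V]
    [DecidableEq V] (hv : 2 ≤ Fintype.card V)
    (E : Finset (Finset V)) (hunif : ∀ e ∈ E, e.card = n)
    (l r : V → ℕ)
    (hl : ∀ i, l i = (E.filter fun e => i ∈ e).card)
    (hr : ∀ i, r i = (Finset.univ.erase i).sup
      fun j => (E.filter fun e => i ∈ e ∧ j ∈ e).card)
    (γ : ℕ)
    (hγ : γ = ((E ×ˢ E).filter fun p => p.1 ≠ p.2 ∧ (p.1 ∩ p.2).card = 1).card) :
    (γ : ℤ) ≤ ∑ i : V, ((l i : ℤ) * (l i - 1) - (r i : ℤ) * (r i - 1)) := by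
  haveI : Nonempty V := Fintype.card_pos_iff.mp (by omega)
  haveI : Inhabited V := Classical.inhabited_of_nonempty ‹_›
  -- choose for each i a vertex j i ≠ i achieving the sup
  have hj : ∀ i : V, ∃ j ∈ Finset.univ.erase i,
      (E.filter fun e => i ∈ e ∧ j ∈ e).card = r i := by
    intro i
    have hne : (Finset.univ.erase i).Nonempty := by
      rw [← Finset.card_pos, Finset.card_erase_of_mem (Finset.mem_univ i)]
      simp only [Finset.card_univ]; omega
    obtain ⟨j, hjm, hje⟩ := Finset.exists_mem_eq_sup (Finset.univ.erase i) hne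
      (fun j => (E.filter fun e => i ∈ e ∧ j ∈ e).card)
    exact ⟨j, hjm, by rw [hr i, hje]⟩
  choose j hjm hjc using hj
  set P := ((E ×ˢ E).filter fun p => p.1 ≠ p.2 ∧ (p.1 ∩ p.2).card = 1) with hP
  set f : Finset V × Finset V → V := fun p =>
    if h : (p.1 ∩ p.2).Nonempty then h.choose else default with hf
  have hfp : ∀ p : Finset V × Finset V, (p.1 ∩ p.2).card = 1 → p.1 ∩ p.2 = {f p} := by
    intro p hc
    obtain ⟨a, ha⟩ := Finset.card_eq_one.mp hc
    have hne : (p.1 ∩ p.2).Nonempty := ⟨a, ha ▸ Finset.mem_singleton_self a⟩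
    have h1 : f p ∈ p.1 ∩ p.2 := by
      simp only [hf, dif_pos hne]
      exact hne.choose_spec
    rw [ha, Finset.mem_singleton] at h1
    rw [ha, h1]
  have hsum : γ = ∑ i : V, (P.filter fun p => f p = i).card := by
    rw [hγ]
    exact Finset.card_eq_sum_card_fiberwise (fun p _ => Finset.mem_univ (f p))
  rw [hsum]
  push_cast
  apply Finset.sum_le_sum
  intro i _
  set S := E.filter (fun e => i ∈ e) with hS
  set T := E.filter (fun e => i ∈ e ∧ j i ∈ e) with hT
  have hsub : (P.filter fun p => f p = i) ∪ T.offDiag ⊆ S.offDiag := by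
    intro p hp
    simp only [Finset.mem_union, Finset.mem_filter, Finset.mem_offDiag, hP, hS, hT,
      Finset.mem_product] at hp ⊢
    rcases hp with ⟨⟨⟨h1, h2⟩, hne12, hc⟩, hfi⟩ | ⟨⟨h1, hi1, _⟩, ⟨h2, hi2, _⟩, hne⟩
    · have hpi : p.1 ∩ p.2 = {i} := by rw [hfp p hc, hfi]
      have hmem : i ∈ p.1 ∩ p.2 := hpi ▸ Finset.mem_singleton_self i
      rw [Finset.mem_inter] at hmem
      exact ⟨⟨h1, hmem.1⟩, ⟨h2, hmem.2⟩, hne12⟩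
    · exact ⟨⟨h1, hi1⟩, ⟨h2, hi2⟩, hne⟩
  have hdisj : Disjoint (P.filter fun p => f p = i) T.offDiag := by
    rw [Finset.disjoint_left]
    intro p hp hp'
    simp only [Finset.mem_filter, hP, Finset.mem_product] at hp
    have hpi : p.1 ∩ p.2 = {i} := by rw [hfp p hp.1.2.2, hp.2]
    simp only [Finset.mem_offDiag, hT, Finset.mem_filter] at hp'
    have hjmem : j i ∈ p.1 ∩ p.2 := Finset.mem_inter.mpr ⟨hp'.1.2.2, hp'.2.1.2.2⟩
    rw [hpi, Finset.mem_singleton] at hjmem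
    exact (Finset.ne_of_mem_erase (hjm i)) hjmem
  have hcard : (P.filter fun p => f p = i).card + T.offDiag.card ≤ S.offDiag.card := by
    rw [← Finset.card_union_of_disjoint hdisj]
    exact Finset.card_le_card hsub
  rw [Finset.offDiag_card, Finset.offDiag_card] at hcard
  have hSc : S.card = l i := (hl i).symm
  have hTc : T.card = r i := hjc i
  rw [hSc, hTc] at hcard
  have hZ : ((P.filter fun p => f p = i).card : ℤ) + ((r i : ℤ) * r i - r i)
      ≤ (l i : ℤ) * l i - l i := by
    calc ((P.filter fun p => f p = i).card : ℤ) + ((r i : ℤ) * r i - r i)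
        = (((P.filter fun p => f p = i).card + (r i * r i - r i) : ℕ) : ℤ) := by
          push_cast [cast_sq_sub']; ring
      _ ≤ ((l i * l i - l i : ℕ) : ℤ) := by exact_mod_cast hcard
      _ = (l i : ℤ) * l i - l i := cast_sq_sub' _
  linarith
end

section
/- The Catalan number C_n is odd if and only if n = 2^k − 1 for some k ≥ 0. -/
open Finset

lemma catalan_cast_succ (n : ℕ) :
    (catalan (n + 1) : ZMod 2) = ∑ i ∈ range (n + 1), (catalan i : ZMod 2) * catalan (n - i) := by
  rw [catalan_succ]
  push_cast
  rw [Fin.sum_univ_eq_sum_range (fun i => (catalan i : ZMod 2) * catalan (n - i))]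

lemma catalan_even (m : ℕ) : (catalan (2 * m + 2) : ZMod 2) = 0 := by
  rw [show 2 * m + 2 = (2 * m + 1) + 1 by ring, catalan_cast_succ]
  apply Finset.sum_involution (fun a _ => 2 * m + 1 - a)
  · intro a ha
    simp only [mem_range] at ha
    rw [Nat.sub_sub_self (by omega : a ≤ 2 * m + 1), mul_comm]
    exact CharTwo.add_self_eq_zero _
  · intro a ha _
    simp only [mem_range] at ha
    omega
  · intro a ha
    simp only [mem_range] at ha ⊢
    omega
  · intro a ha
    simp only [mem_range] at ha
    omega

lemma catalan_odd_step (m : ℕ) : (catalan (2 * m + 1) : ZMod 2) = (catalan m : ZMod 2) := by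
  rw [show 2 * m + 1 = (2 * m) + 1 by ring, catalan_cast_succ]
  have hm : m ∈ range (2 * m + 1) := by simp; omega
  rw [← Finset.add_sum_erase _ _ hm]
  have h0 : ∑ i ∈ (range (2 * m + 1)).erase m,
      (catalan i : ZMod 2) * catalan (2 * m - i) = 0 := by
    apply Finset.sum_involution (fun a _ => 2 * m - a)
    · intro a ha
      simp only [mem_erase, mem_range] at ha
      rw [Nat.sub_sub_self (by omega : a ≤ 2 * m), mul_comm]
      exact CharTwo.add_self_eq_zero _
    · intro a ha _
      simp only [mem_erase, mem_range] at ha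
      omega
    · intro a ha
      simp only [mem_erase, mem_range] at ha ⊢
      omega
    · intro a ha
      simp only [mem_erase, mem_range] at ha
      omega
  have hsq : ∀ x : ZMod 2, x * x = x := by decide
  rw [h0, add_zero, show 2 * m - m = m by omega, hsq]

lemma odd_iff_cast (c : ℕ) : Odd c ↔ (c : ZMod 2) = 1 := by
  rw [Nat.odd_iff, ← ZMod.natCast_mod c 2]
  rcases Nat.mod_two_eq_zero_or_one c with h | h <;> rw [h] <;> simp

/-- The Catalan number `Cₙ` is odd iff `n = 2^k - 1` for some `k`. -/
theorem catalan_odd_iff (n : ℕ) : Odd (catalan n) ↔ ∃ k : ℕ, n = 2 ^ k - 1 := by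
  induction n using Nat.strong_induction_on with
  | _ n ih =>
    match n with
    | 0 => simp [catalan_zero]; exact ⟨0, rfl⟩
    | n + 1 =>
      rcases Nat.even_or_odd n with ⟨m, hm⟩ | ⟨m, hm⟩
      · -- n = 2m, n+1 = 2m+1
        subst hm
        rw [odd_iff_cast, show m + m + 1 = 2 * m + 1 by ring, catalan_odd_step,
          ← odd_iff_cast, ih m (by omega)]
        constructor
        · rintro ⟨k, hk⟩
          refine ⟨k + 1, ?_⟩
          have : 2 ^ (k + 1) = 2 * 2 ^ k := by ring
          have h1 : 1 ≤ 2 ^ k := Nat.one_le_two_pow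
          omega
        · rintro ⟨k, hk⟩
          match k with
          | 0 => omega
          | k + 1 =>
            refine ⟨k, ?_⟩
            have : 2 ^ (k + 1) = 2 * 2 ^ k := by ring
            have h1 : 1 ≤ 2 ^ k := Nat.one_le_two_pow
            omega
      · -- n = 2m+1, n+1 = 2m+2
        subst hm
        rw [odd_iff_cast, show 2 * m + 1 + 1 = 2 * m + 2 by ring, catalan_even]
        constructor
        · intro h; exact absurd h (by decide)
        · rintro ⟨k, hk⟩
          match k with
          | 0 => omega
          | k + 1 =>
            have : 2 ^ (k + 1) = 2 * 2 ^ k := by ring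
            have h1 : 1 ≤ 2 ^ k := Nat.one_le_two_pow
            omega
end

section
/- The multiplicity of 2 in the prime factorization of the Catalan number C_n is one less than the number of ones in the binary representation of n+1. -/
open Nat

-- binary digit sum abbreviation: s m = (Nat.digits 2 m).sum

lemma sum_eq_count_one (l : List ℕ) (h : ∀ x ∈ l, x < 2) : l.sum = l.count 1 := by
  induction l with
  | nil => simp
  | cons a t ih =>
    have ha : a < 2 := h a (by simp)
    have ht := ih (fun x hx => h x (by simp [hx]))
    interval_cases a <;> simp [List.count_cons, ht] <;> omega

lemma digitsum_two_mul (m : ℕ) : (Nat.digits 2 (2 * m)).sum = (Nat.digits 2 m).sum := by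
  rcases Nat.eq_zero_or_pos m with h | h
  · simp [h]
  · rw [Nat.digits_def' (by norm_num) (by omega)]
    simp [Nat.mul_div_cancel_left _ (by norm_num : 0 < 2), Nat.mul_mod_right]

lemma digitsum_succ (n : ℕ) :
    (Nat.digits 2 n).sum + 1 = (Nat.digits 2 (n + 1)).sum + padicValNat 2 (n + 1) := by
  induction n using Nat.strong_induction_on with
  | _ n ih =>
    rcases Nat.even_or_odd n with ⟨m, hm⟩ | ⟨m, hm⟩
    · subst hm
      have h1 : padicValNat 2 (m + m + 1) = 0 := by
        apply padicValNat.eq_zero_of_not_dvd; omega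
      rw [h1, add_zero]
      have h2 : (Nat.digits 2 (m + m + 1)).sum = (Nat.digits 2 m).sum + 1 := by
        rw [Nat.digits_def' (by norm_num : 1 < 2) (by omega)]
        have : (m + m + 1) / 2 = m := by omega
        have h3 : (m + m + 1) % 2 = 1 := by omega
        simp [this, h3, add_comm]
      have h4 : m + m = 2 * m := by ring
      rw [h2, h4, digitsum_two_mul]
    · subst hm
      have key := ih m (by omega)
      have h1 : 2 * m + 1 + 1 = 2 * (m + 1) := by ring
      have h2 : padicValNat 2 (2 * (m + 1)) = padicValNat 2 (m + 1) + 1 := by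
        rw [padicValNat.mul (by norm_num) (by omega), padicValNat.self (by norm_num)]
        omega
      have h3 : (Nat.digits 2 (2 * m + 1)).sum = (Nat.digits 2 m).sum + 1 := by
        rw [Nat.digits_def' (by norm_num : 1 < 2) (by omega)]
        have h5 : (2 * m + 1) / 2 = m := by omega
        have h6 : (1 + 2 * m) / 2 = m := by omega
        have h4 : (2 * m + 1) % 2 = 1 := by omega
        simp [h5, h6, h4, add_comm]
      rw [h1, h2, h3, digitsum_two_mul]
      omega

lemma val_centralBinom (n : ℕ) :
    padicValNat 2 (Nat.centralBinom n) = (Nat.digits 2 n).sum := by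
  have : Fact (Nat.Prime 2) := ⟨Nat.prime_two⟩
  have h := sub_one_mul_padicValNat_choose_eq_sub_sum_digits (p := 2) (k := n) (n := 2 * n)
    (by omega)
  rw [Nat.centralBinom]
  have h2 : 2 * n - n = n := by omega
  rw [h2, digitsum_two_mul] at h
  have h3 : (Nat.digits 2 n).sum ≤ n := Nat.digit_sum_le 2 n
  simpa using h

/-- Deutsch–Sagan: the 2-adic valuation of the Catalan number `Cₙ` is one less
than the number of ones in the binary representation of `n+1`. -/
theorem catalan_two_adic_valuation (n : ℕ) :
    padicValNat 2 (catalan n) + 1 = (Nat.digits 2 (n + 1)).count 1 := by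
  have hcb := succ_mul_catalan_eq_centralBinom n
  have : Fact (Nat.Prime 2) := ⟨Nat.prime_two⟩
  have hv : padicValNat 2 (n + 1) + padicValNat 2 (catalan n)
      = (Nat.digits 2 n).sum := by
    rw [← val_centralBinom n, ← hcb, padicValNat.mul (by omega) (by
      intro hc
      have := succ_mul_catalan_eq_centralBinom n
      rw [hc, mul_zero] at this
      exact (Nat.centralBinom_pos n).ne' this.symm)]
  have hs := digitsum_succ n
  have hcount : (Nat.digits 2 (n + 1)).count 1 = (Nat.digits 2 (n + 1)).sum :=
    (sum_eq_count_one _ (fun x hx => Nat.digits_lt_base (by norm_num) hx)).symm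
  omega
end

section
/- For n = 2^r(2^{2k}+1) − 2 with r, k ≥ 1, the number L₁₂⁰ = (2n−1)!/((n−2)!·(n+2)!) is not an integer, but 4·L₁₂⁰ is an integer; consequently for every integer L, |L − L₁₂⁰| ≥ 1/4. -/
open Nat


private def S2 (m : ℕ) : ℕ := (Nat.digits 2 m).sum

private lemma S2_eq (x : ℕ) : (Nat.digits 2 x).sum = S2 x := rfl

private lemma S2_two_mul (m : ℕ) : S2 (2 * m) = S2 m := by
  rcases Nat.eq_zero_or_pos m with h | h
  · simp [h]
  · unfold S2
    rw [Nat.digits_def' (by norm_num : 1 < 2) (by omega)]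
    simp [Nat.mul_div_cancel_left _ (by norm_num : 0 < 2), Nat.mul_mod_right]

private lemma S2_two_mul_add_one (m : ℕ) : S2 (2 * m + 1) = S2 m + 1 := by
  unfold S2
  rw [Nat.digits_def' (by norm_num : 1 < 2) (by omega)]
  have h1 : (2 * m + 1) % 2 = 1 := by omega
  have h2 : (2 * m + 1) / 2 = m := by omega
  rw [h1, h2]
  simp [Nat.add_comm]

private lemma S2_pow_sub_one (a : ℕ) : S2 (2 ^ a - 1) = a := by
  induction a with
  | zero => simp [S2]
  | succ a ih =>
    have h : 2 ^ (a + 1) - 1 = 2 * (2 ^ a - 1) + 1 := by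
      have := Nat.one_le_two_pow (n := a); ring_nf; omega
    rw [h, S2_two_mul_add_one, ih]

private lemma S2_pow_add (a : ℕ) : ∀ x < 2 ^ a, S2 (2 ^ a + x) = S2 x + 1 := by
  induction a with
  | zero =>
    intro x hx
    interval_cases x
    simp [S2]
  | succ a ih =>
    intro x hx
    rcases Nat.even_or_odd x with ⟨y, hy⟩ | ⟨y, hy⟩
    · have hy2 : y < 2 ^ a := by rw [pow_succ] at hx; omega
      have h : 2 ^ (a + 1) + x = 2 * (2 ^ a + y) := by rw [pow_succ]; omega
      rw [h, S2_two_mul, ih y hy2, hy, ← two_mul, S2_two_mul]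
    · have hy2 : y < 2 ^ a := by rw [pow_succ] at hx; omega
      have h : 2 ^ (a + 1) + x = 2 * (2 ^ a + y) + 1 := by rw [pow_succ]; omega
      rw [h, S2_two_mul_add_one, ih y hy2, hy, S2_two_mul_add_one]

private lemma S2_pow (a : ℕ) : S2 (2 ^ a) = 1 := by
  have := S2_pow_add a 0 (by positivity)
  simpa [S2] using this

private lemma val_choose (R r n : ℕ) (hr : 1 ≤ r) (hR : r + 2 ≤ R)
    (hn : n + 2 = 2 ^ R + 2 ^ r) :
    padicValNat 2 ((2 * n).choose (n + 2)) = padicValNat 2 n := by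
  have h1 : 2 ≤ 2 ^ r := by
    calc 2 = 2 ^ 1 := by norm_num
    _ ≤ 2 ^ r := Nat.pow_le_pow_right (by norm_num) hr
  have h2 : 4 * 2 ^ r ≤ 2 ^ R := by
    calc 4 * 2 ^ r = 2 ^ (r + 2) := by ring
    _ ≤ 2 ^ R := Nat.pow_le_pow_right (by norm_num) hR
  have hb1 : 2 ^ r = 2 * 2 ^ (r - 1) := by
    conv_lhs => rw [show r = (r - 1) + 1 by omega]
    ring
  have hb2 : 2 ^ R = 2 * 2 ^ (R - 1) := by
    conv_lhs => rw [show R = (R - 1) + 1 by omega]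
    ring
  have hb3 : 2 ^ (R - 1) = 2 * 2 ^ (R - 2) := by
    conv_lhs => rw [show R - 1 = (R - 2) + 1 by omega]
    ring
  have hn8 : 8 ≤ n := by omega
  -- digit sums
  have hSn2 : S2 (n + 2) = 2 := by rw [hn, S2_pow_add R _ (by omega), S2_pow]
  have hSn : S2 n = r := by
    have en : n = 2 ^ R + (2 ^ r - 2) := by omega
    have e2 : 2 ^ r - 2 = 2 * (2 ^ (r - 1) - 1) := by omega
    rw [en, S2_pow_add R _ (by omega), e2, S2_two_mul, S2_pow_sub_one]
    omega
  have hS2n : S2 (2 * n) = r := by rw [S2_two_mul, hSn]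
  -- Kummer
  have hk := sub_one_mul_padicValNat_choose_eq_sub_sum_digits (p := 2)
    (show n + 2 ≤ 2 * n by omega)
  rw [show 2 * n - (n + 2) = n - 2 by omega] at hk
  rw [S2_eq, S2_eq, S2_eq, hSn2, hS2n] at hk
  rcases Nat.lt_or_ge r 2 with hrc | hrc
  · -- r = 1, n = 2^R
    have hr1 : r = 1 := by omega
    have hnn : n = 2 ^ R := by
      subst hr1; omega
    have hSm : S2 (n - 2) = R - 1 := by
      have e : n - 2 = 2 * (2 ^ (R - 1) - 1) := by omega
      rw [e, S2_two_mul, S2_pow_sub_one]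
    have hvn : padicValNat 2 n = R := by rw [hnn]; exact padicValNat.prime_pow R
    rw [hSm] at hk
    subst hr1
    omega
  · -- r ≥ 2
    have hb4 : 2 ^ r = 4 * 2 ^ (r - 2) := by
      conv_lhs => rw [show r = (r - 2) + 2 by omega]
      ring
    have hb5 : 2 ^ (r - 1) = 2 * 2 ^ (r - 2) := by
      conv_lhs => rw [show r - 1 = (r - 2) + 1 by omega]
      ring
    have hSm : S2 (n - 2) = r - 1 := by
      have e : n - 2 = 2 ^ R + (2 ^ r - 4) := by omega
      have e2 : 2 ^ r - 4 = 2 * (2 * (2 ^ (r - 2) - 1)) := by omega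
      rw [e, S2_pow_add R _ (by omega), e2, S2_two_mul, S2_two_mul, S2_pow_sub_one]
      omega
    have hvn : padicValNat 2 n = 1 := by
      have ht : n = 2 * (2 ^ (R - 1) + 2 ^ (r - 1) - 1) := by omega
      have hodd : ¬ 2 ∣ (2 ^ (R - 1) + 2 ^ (r - 1) - 1) := by
        have d1 : 2 ∣ 2 ^ (R - 1) := ⟨2 ^ (R - 2), hb3⟩
        have d2 : 2 ∣ 2 ^ (r - 1) := ⟨2 ^ (r - 2), hb5⟩
        omega
      rw [ht, padicValNat.mul (by norm_num) (by omega), padicValNat.self (by norm_num),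
        padicValNat.eq_zero_of_not_dvd hodd]
    rw [hSm] at hk
    omega



private lemma key_id (m : ℕ) :
    4 * ((Nat.factorial (2 * m + 15) : ℚ)
        / ((Nat.factorial (m + 6) : ℚ) * (Nat.factorial (m + 10) : ℚ)))
      = ((Nat.choose (2 * m + 15) (m + 9) : ℚ) - (Nat.choose (2 * m + 15) (m + 10) : ℚ)) ∧
    ((m : ℚ) + 8) * ((Nat.choose (2 * m + 15) (m + 9) : ℚ) - (Nat.choose (2 * m + 15) (m + 10) : ℚ))
      = 2 * (Nat.choose (2 * m + 16) (m + 10) : ℚ) := by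
  have hA := Nat.choose_mul_factorial_mul_factorial (show m + 9 ≤ 2 * m + 15 by omega)
  have hB := Nat.choose_mul_factorial_mul_factorial (show m + 10 ≤ 2 * m + 15 by omega)
  have hC := Nat.choose_mul_factorial_mul_factorial (show m + 10 ≤ 2 * m + 16 by omega)
  have e1 : 2 * m + 15 - (m + 9) = m + 6 := by omega
  have e2 : 2 * m + 15 - (m + 10) = m + 5 := by omega
  have e3 : 2 * m + 16 - (m + 10) = m + 6 := by omega
  rw [e1] at hA; rw [e2] at hB; rw [e3] at hC
  have hAq : (Nat.choose (2 * m + 15) (m + 9) : ℚ) * (Nat.factorial (m + 9) : ℚ)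
      * (Nat.factorial (m + 6) : ℚ) = (Nat.factorial (2 * m + 15) : ℚ) := by
    exact_mod_cast congrArg (Nat.cast : ℕ → ℚ) hA
  have hBq : (Nat.choose (2 * m + 15) (m + 10) : ℚ) * (Nat.factorial (m + 10) : ℚ)
      * (Nat.factorial (m + 5) : ℚ) = (Nat.factorial (2 * m + 15) : ℚ) := by
    exact_mod_cast congrArg (Nat.cast : ℕ → ℚ) hB
  have hCq : (Nat.choose (2 * m + 16) (m + 10) : ℚ) * (Nat.factorial (m + 10) : ℚ)
      * (Nat.factorial (m + 6) : ℚ) = (Nat.factorial (2 * m + 16) : ℚ) := by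
    exact_mod_cast congrArg (Nat.cast : ℕ → ℚ) hC
  have f10q : (Nat.factorial (m + 10) : ℚ) = ((m : ℚ) + 10) * (Nat.factorial (m + 9) : ℚ) := by
    have := Nat.factorial_succ (m + 9)
    have h := congrArg (Nat.cast : ℕ → ℚ) this
    push_cast at h ⊢
    linarith [h]
  have f6q : (Nat.factorial (m + 6) : ℚ) = ((m : ℚ) + 6) * (Nat.factorial (m + 5) : ℚ) := by
    have := Nat.factorial_succ (m + 5)
    have h := congrArg (Nat.cast : ℕ → ℚ) this
    push_cast at h ⊢
    linarith [h]
  have f16q : (Nat.factorial (2 * m + 16) : ℚ)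
      = (2 * (m : ℚ) + 16) * (Nat.factorial (2 * m + 15) : ℚ) := by
    have h15 : 2 * m + 16 = (2 * m + 15) + 1 := by omega
    have := Nat.factorial_succ (2 * m + 15)
    rw [← h15] at this
    have h := congrArg (Nat.cast : ℕ → ℚ) this
    push_cast at h ⊢
    linarith [h]
  have hne : (Nat.factorial (m + 6) : ℚ) * (Nat.factorial (m + 10) : ℚ) ≠ 0 := by positivity
  have h1m : ((Nat.choose (2 * m + 15) (m + 9) : ℚ) - (Nat.choose (2 * m + 15) (m + 10) : ℚ))
      * ((Nat.factorial (m + 6) : ℚ) * (Nat.factorial (m + 10) : ℚ))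
      = 4 * (Nat.factorial (2 * m + 15) : ℚ) := by
    linear_combination (((m:ℚ)+10)) * hAq + (-((m:ℚ)+6)) * hBq
      + (((Nat.choose (2 * m + 15) (m + 9) : ℚ) * (Nat.factorial (m + 6) : ℚ))) * f10q
      + (-((Nat.choose (2 * m + 15) (m + 10) : ℚ) * (Nat.factorial (m + 10) : ℚ))) * f6q
  constructor
  · rw [mul_div_assoc', eq_comm, eq_div_iff hne]
    linear_combination h1m
  · have h2 : (((m : ℚ) + 8) * ((Nat.choose (2 * m + 15) (m + 9) : ℚ)
        - (Nat.choose (2 * m + 15) (m + 10) : ℚ)))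
        * ((Nat.factorial (m + 6) : ℚ) * (Nat.factorial (m + 10) : ℚ))
        = (2 * (Nat.choose (2 * m + 16) (m + 10) : ℚ))
        * ((Nat.factorial (m + 6) : ℚ) * (Nat.factorial (m + 10) : ℚ)) := by
      linear_combination ((m:ℚ)+8) * h1m + (-2) * hCq + (-2) * f16q
    exact mul_right_cancel₀ hne h2


set_option maxHeartbeats 2000000 in
/-- For `n = 2^r(2^{2k}+1) - 2` with `r, k ≥ 1`, the rational number
`L₁₂⁰ = (2n-1)!/((n-2)!(n+2)!)` is not an integer, `4·L₁₂⁰` is an integer, and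
hence every integer is at distance at least `1/4` from `L₁₂⁰`. -/
theorem L12_quarter_distance (r k n : ℕ) (hr : 1 ≤ r) (hk : 1 ≤ k)
    (hn : n = 2 ^ r * (2 ^ (2 * k) + 1) - 2)
    (L120 : ℚ)
    (hL : L120 = (Nat.factorial (2 * n - 1) : ℚ)
      / ((Nat.factorial (n - 2) : ℚ) * (Nat.factorial (n + 2) : ℚ))) :
    (¬ ∃ z : ℤ, L120 = (z : ℚ)) ∧ (∃ z : ℤ, 4 * L120 = (z : ℚ)) ∧
      ∀ L : ℤ, 1 / 4 ≤ |(L : ℚ) - L120| := by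
  have h1 : 2 ≤ 2 ^ r := by
    calc 2 = 2 ^ 1 := by norm_num
    _ ≤ 2 ^ r := Nat.pow_le_pow_right (by norm_num) hr
  have hsplit : 2 ^ r * (2 ^ (2 * k) + 1) = 2 ^ (2 * k + r) + 2 ^ r := by
    rw [pow_add]; ring
  have hRr : n + 2 = 2 ^ (2 * k + r) + 2 ^ r := by
    rw [hn]; rw [hsplit] at *
    have h2 : 4 * 2 ^ r ≤ 2 ^ (2 * k + r) := by
      calc 4 * 2 ^ r = 2 ^ (r + 2) := by ring
      _ ≤ 2 ^ (2 * k + r) := Nat.pow_le_pow_right (by norm_num) (by omega)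
    omega
  have hr2 : r + 2 ≤ 2 * k + r := by omega
  have h2 : 4 * 2 ^ r ≤ 2 ^ (2 * k + r) := by
    calc 4 * 2 ^ r = 2 ^ (r + 2) := by ring
    _ ≤ 2 ^ (2 * k + r) := Nat.pow_le_pow_right (by norm_num) hr2
  have hn8 : 8 ≤ n := by omega
  obtain ⟨m, hm⟩ : ∃ m, n = m + 8 := ⟨n - 8, by omega⟩
  obtain ⟨hid1, hid2⟩ := key_id m
  have hL' : L120 = (Nat.factorial (2 * m + 15) : ℚ)
      / ((Nat.factorial (m + 6) : ℚ) * (Nat.factorial (m + 10) : ℚ)) := by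
    rw [hL, show 2 * n - 1 = 2 * m + 15 by omega, show n - 2 = m + 6 by omega,
      show n + 2 = m + 10 by omega]
  set A := Nat.choose (2 * m + 15) (m + 9) with hA
  set B := Nat.choose (2 * m + 15) (m + 10) with hB
  set C := Nat.choose (2 * m + 16) (m + 10) with hC
  have h4L : 4 * L120 = (A : ℚ) - B := by rw [hL']; exact hid1
  have hC0 : 0 < C := by rw [hC]; exact Nat.choose_pos (by omega)
  have hCq : (0 : ℚ) < (C : ℚ) := by exact_mod_cast hC0
  have h8 : (0 : ℚ) ≤ (m : ℚ) + 8 := by positivity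
  have hABpos : (0 : ℚ) < (A : ℚ) - (B : ℚ) := by
    rcases lt_or_ge (0 : ℚ) ((A : ℚ) - (B : ℚ)) with h | h
    · exact h
    · exfalso
      have hle := mul_le_mul_of_nonneg_left h h8
      rw [mul_zero] at hle
      linarith [hid2]
  have hBA : B ≤ A := by
    have hlt : (B : ℚ) < (A : ℚ) := by linarith
    have : B < A := by exact_mod_cast hlt
    omega
  have hNat : n * (A - B) = 2 * C := by
    have hq : ((n : ℚ)) * ((A : ℚ) - (B : ℚ)) = 2 * C := by
      rw [hm]; push_cast; linarith [hid2]
    have hq2 : ((n * (A - B) : ℕ) : ℚ) = ((2 * C : ℕ) : ℚ) := by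
      push_cast [Nat.cast_sub hBA]
      linarith [hq]
    exact_mod_cast hq2
  set z := A - B with hz
  have hz0 : z ≠ 0 := by
    intro h
    rw [h] at hNat
    omega
  have hvz : padicValNat 2 z = 1 := by
    have hmul1 : padicValNat 2 (n * z) = padicValNat 2 n + padicValNat 2 z :=
      padicValNat.mul (by omega) hz0
    have hmul2 : padicValNat 2 (2 * C) = 1 + padicValNat 2 C := by
      rw [padicValNat.mul (by norm_num) (by omega), padicValNat.self (by norm_num)]
    have h3 := val_choose (2 * k + r) r n hr hr2 hRr
    rw [show 2 * n = 2 * m + 16 by omega, show n + 2 = m + 10 by omega, ← hC] at h3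
    rw [hNat] at hmul1
    omega
  have h4dvd : ¬ (4 ∣ z) := by
    intro h
    have hd : (2 : ℕ) ^ 2 ∣ z := by norm_num; exact h
    rw [Nat.Prime.pow_dvd_iff_le_factorization Nat.prime_two hz0,
      Nat.factorization_def _ Nat.prime_two, hvz] at hd
    omega
  have hzq : 4 * L120 = (z : ℚ) := by
    rw [h4L, hz]
    push_cast [Nat.cast_sub hBA]
    ring
  refine ⟨?_, ⟨(z : ℤ), by exact_mod_cast hzq⟩, ?_⟩
  · rintro ⟨w, hw⟩
    have hq : ((4 * w : ℤ) : ℚ) = ((z : ℤ) : ℚ) := by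
      push_cast
      rw [← hzq, hw]
    have hzw : (z : ℤ) = 4 * w := by exact_mod_cast hq.symm
    have : (4 : ℤ) ∣ (z : ℤ) := ⟨w, hzw⟩
    have : (4 : ℕ) ∣ z := by exact_mod_cast this
    exact h4dvd this
  · intro L
    set d : ℤ := 4 * L - (z : ℤ) with hd
    have hdne : d ≠ 0 := by
      intro h
      apply h4dvd
      have hzL : (z : ℤ) = 4 * L := by omega
      have : (4 : ℤ) ∣ (z : ℤ) := ⟨L, hzL⟩
      exact_mod_cast this
    have habs : (1 : ℤ) ≤ |d| := Int.one_le_abs (by omega)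
    have hcast : ((d : ℤ) : ℚ) = 4 * ((L : ℚ) - L120) := by
      rw [hd]
      push_cast
      rw [show ((z:ℕ):ℚ) = 4 * L120 from hzq.symm]
      ring
    have habsq : (1 : ℚ) ≤ |((d : ℤ) : ℚ)| := by
      rw [← Int.cast_abs]
      exact_mod_cast habs
    rw [hcast, abs_mul] at habsq
    rw [show |(4:ℚ)| = 4 from by norm_num] at habsq
    linarith
end
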